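/- Let θ > 0 be a real constant and let g : [0,∞) → [0,∞) be a measurable nonnegative function with g(0) = 0 and g(0+) = 0. Define I[θ,g](t) = ∫₀^∞ x^{θ−1} exp(−t·x − g(x)) dx. Then liminf_{t→∞} t^θ · I[θ,g](t) ≥ Γ(θ); this follows from the lower estimate by choosing the truncation level Δ = Δ(t) = t^{−1/2}. -/

import Mathlib

/-! The substitution `u = t x` turns `t^θ I[θ,g](t)` into
`∫₀^∞ u^{θ-1} e^{-u - g(u/t)} du`. Since `g ≥ 0` the integrand is dominated by the Gamma
integrand `u^{θ-1} e^{-u}`, and it converges to it pointwise as `t → ∞` because `g(0+) = 0`;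
dominated convergence gives `t^θ I[θ,g](t) → Γ(θ)`. -/

open MeasureTheory Real Filter Set Topology

theorem rpow_mul_integral_Ioi_rpow_mul_comp_mul {θ t : ℝ} (ht : 0 < t) (h : ℝ → ℝ) :
    t ^ θ * ∫ x in Ioi (0 : ℝ), x ^ (θ - 1) * h (t * x) =
      ∫ u in Ioi (0 : ℝ), u ^ (θ - 1) * h u := by
  have hsubst := integral_comp_mul_left_Ioi (fun u => u ^ (θ - 1) * h u) 0 ht
  simp only [mul_zero, smul_eq_mul] at hsubst
  have hsplit : ∀ x ∈ Ioi (0 : ℝ), (t * x) ^ (θ - 1) * h (t * x) =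
      t ^ (θ - 1) * (x ^ (θ - 1) * h (t * x)) := fun x hx => by
    rw [mul_rpow ht.le (le_of_lt hx), mul_assoc]
  rw [setIntegral_congr_fun measurableSet_Ioi hsplit, integral_const_mul] at hsubst
  have hpow : t ^ θ = t * t ^ (θ - 1) := by
    rw [rpow_sub_one ht.ne']
    field_simp
  rw [hpow, mul_assoc, hsubst, ← mul_assoc, mul_inv_cancel₀ ht.ne', one_mul]

theorem tendsto_div_atTop_nhdsGT_zero {u : ℝ} (hu : 0 < u) :
    Tendsto (fun t : ℝ => u / t) atTop (𝓝[>] 0) :=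
  tendsto_nhdsWithin_iff.mpr
    ⟨tendsto_const_nhds.div_atTop tendsto_id,
      (eventually_gt_atTop 0).mono fun _ ht => div_pos hu ht⟩

theorem tendsto_integral_rpow_mul_exp_neg_sub_comp_div {θ : ℝ} (hθ : 0 < θ) {g : ℝ → ℝ}
    (hg_meas : Measurable g) (hg_nonneg : ∀ x, 0 ≤ x → 0 ≤ g x)
    (hg_lim : Tendsto g (𝓝[>] 0) (𝓝 0)) :
    Tendsto (fun t : ℝ => ∫ u in Ioi (0 : ℝ), u ^ (θ - 1) * exp (-u - g (u / t))) atTop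
      (𝓝 (Gamma θ)) := by
  have hGamma : Gamma θ = ∫ u in Ioi (0 : ℝ), u ^ (θ - 1) * exp (-u - 0) := by
    simp only [sub_zero, Gamma_eq_integral hθ, mul_comm]
  have hbound : IntegrableOn (fun u : ℝ => u ^ (θ - 1) * exp (-u)) (Ioi 0) := by
    simpa only [mul_comm] using GammaIntegral_convergent hθ
  rw [hGamma]
  refine tendsto_integral_filter_of_dominated_convergence _ ?_ ?_ hbound ?_
  · refine Eventually.of_forall fun t => Measurable.aestronglyMeasurable ?_
    have : Measurable fun u : ℝ => g (u / t) := hg_meas.comp (measurable_id.div_const t)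
    fun_prop
  · filter_upwards [eventually_gt_atTop (0 : ℝ)] with t ht
    refine (ae_restrict_iff' measurableSet_Ioi).mpr (Eventually.of_forall fun u (hu : 0 < u) => ?_)
    have hg : 0 ≤ g (u / t) := hg_nonneg _ (div_pos hu ht).le
    rw [norm_of_nonneg (by positivity)]
    gcongr
    linarith
  · refine (ae_restrict_iff' measurableSet_Ioi).mpr (Eventually.of_forall fun u hu => ?_)
    exact tendsto_const_nhds.mul
      ((tendsto_const_nhds.sub (hg_lim.comp (tendsto_div_atTop_nhdsGT_zero hu))).rexp)

theorem tail_auxiliary_integral_liminf_general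
    (θ : ℝ) (hθ : 0 < θ) (g : ℝ → ℝ) (hg_meas : Measurable g)
    (hg_nonneg : ∀ x, 0 ≤ x → 0 ≤ g x)
    (hg_lim : Tendsto g (nhdsWithin 0 (Ioi 0)) (nhds 0)) :
    Real.Gamma θ ≤
      Filter.liminf
        (fun t : ℝ => t ^ θ * ∫ x in Ioi (0 : ℝ), x ^ (θ - 1) * Real.exp (-(t * x) - g x))
        atTop := by
  have hsubst : ∀ᶠ t : ℝ in atTop,
      (∫ u in Ioi (0 : ℝ), u ^ (θ - 1) * exp (-u - g (u / t))) =
        t ^ θ * ∫ x in Ioi (0 : ℝ), x ^ (θ - 1) * exp (-(t * x) - g x) := by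
    filter_upwards [eventually_gt_atTop (0 : ℝ)] with t ht
    rw [← rpow_mul_integral_Ioi_rpow_mul_comp_mul ht]
    simp only [mul_div_cancel_left₀ _ ht.ne']
  exact ((tendsto_integral_rpow_mul_exp_neg_sub_comp_div hθ hg_meas hg_nonneg hg_lim).congr'
    hsubst).liminf_eq.ge

/-- Lower-bound half of Lemma 4.1: for `θ > 0` and `g` nonnegative measurable on `[0,∞)`
with `g(0) = 0` and `g(0+) = 0`, one has `liminf_{t→∞} t^θ I[θ,g](t) ≥ Γ(θ)`. -/
theorem tail_auxiliary_integral_liminf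
    (θ : ℝ) (hθ : 0 < θ) (g : ℝ → ℝ) (hg_meas : Measurable g)
    (hg_nonneg : ∀ x, 0 ≤ x → 0 ≤ g x) (hg0 : g 0 = 0)
    (hg_lim : Tendsto g (nhdsWithin 0 (Ioi 0)) (nhds 0)) :
    Real.Gamma θ ≤
      Filter.liminf
        (fun t : ℝ => t ^ θ * ∫ x in Ioi (0 : ℝ), x ^ (θ - 1) * Real.exp (-(t * x) - g x))
        atTop :=
  tail_auxiliary_integral_liminf_general θ hθ g hg_meas hg_nonneg hg_lim
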